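/- With c_k = (g tanh(hk)/k)^{1/2}, the derivative in c of the smaller eigenvalue at the critical speed satisfies lim_{k→∞} ∂_c λ_k^−(c_k) / √k = −2√g. -/

import Mathlib

open Real Filter

lemma tanh_eq_exp (x : ℝ) : Real.tanh x = (1 - Real.exp (-2*x)) / (1 + Real.exp (-2*x)) := by
  rw [Real.tanh_eq_sinh_div_cosh, Real.sinh_eq, Real.cosh_eq]
  rw [show (-2*x) = -x + -x by ring, Real.exp_add]
  have h1 := Real.exp_pos x
  have h2 := Real.exp_pos (-x)
  rw [div_eq_div_iff (by positivity) (by positivity)]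
  have : Real.exp x * Real.exp (-x) = 1 := by rw [← Real.exp_add]; simp
  nlinarith [this]

lemma exp_neg2_tendsto : Tendsto (fun x : ℝ => Real.exp (-2*x)) atTop (nhds 0) := by
  apply Real.tendsto_exp_atBot.comp
  exact (tendsto_const_mul_atBot_of_neg (by norm_num : (-2:ℝ) < 0)).mpr tendsto_id

lemma tanh_tendsto : Tendsto Real.tanh atTop (nhds 1) := by
  have h := exp_neg2_tendsto
  have : Tendsto (fun x : ℝ => (1 - Real.exp (-2*x)) / (1 + Real.exp (-2*x))) atTop (nhds 1) := by
    have := ((tendsto_const_nhds (x := (1:ℝ))).sub h).div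
      ((tendsto_const_nhds (x := (1:ℝ))).add h) (by norm_num)
    simpa [Pi.div_def] using this
  exact this.congr fun x => (tanh_eq_exp x).symm

lemma tanh_pos {x : ℝ} (hx : 0 < x) : 0 < Real.tanh x := by
  rw [Real.tanh_eq_sinh_div_cosh]
  exact div_pos (Real.sinh_pos_iff.mpr hx) (Real.cosh_pos x)



noncomputable def ckNat (g h : ℝ) (k : ℕ) : ℝ :=
  Real.sqrt (g * Real.tanh (h * k) / k)

/-- `∂_c λ_k^−(c) = −2 c k² / √((g − k tanh(hk))² + 4 c² k²)` evaluated at `c = c_k`. -/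
noncomputable def dLamMinusAtCk (g h : ℝ) (k : ℕ) : ℝ :=
  -2 * ckNat g h k * (k : ℝ) ^ 2 /
    Real.sqrt ((g - (k : ℝ) * Real.tanh (h * k)) ^ 2 + 4 * (ckNat g h k) ^ 2 * (k : ℝ) ^ 2)

lemma key_eq (g h : ℝ) (hg : 0 < g) (hh : 0 < h) {k : ℕ} (hk : 1 ≤ k) :
    dLamMinusAtCk g h k / Real.sqrt k
      = -2 * Real.sqrt (g * Real.tanh (h * k)) / (g / k + Real.tanh (h * k)) := by
  have kpos : (0:ℝ) < k := by exact_mod_cast hk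
  set t := Real.tanh (h * k) with ht
  have tpos : 0 < t := tanh_pos (by positivity)
  have hck2 : (ckNat g h k) ^ 2 = g * t / k :=
    Real.sq_sqrt (by positivity)
  have hck : ckNat g h k = Real.sqrt (g * t) / Real.sqrt k := by
    rw [ckNat, Real.sqrt_div (by positivity)]
  have hinner : (g - (k:ℝ) * t) ^ 2 + 4 * (ckNat g h k) ^ 2 * (k:ℝ) ^ 2 = (g + k * t) ^ 2 := by
    rw [hck2]; field_simp; ring
  have hsq : Real.sqrt ((g - (k:ℝ) * t) ^ 2 + 4 * (ckNat g h k) ^ 2 * (k:ℝ) ^ 2) = g + k * t := by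
    rw [hinner, Real.sqrt_sq (by positivity)]
  rw [dLamMinusAtCk, hsq, hck]
  have hsk : Real.sqrt (k:ℝ) > 0 := Real.sqrt_pos.mpr kpos
  have hsk2 : Real.sqrt (k:ℝ) * Real.sqrt (k:ℝ) = (k:ℝ) := Real.mul_self_sqrt kpos.le
  have hden : g + (k:ℝ) * t > 0 := by positivity
  have hden2 : g / k + t > 0 := by positivity
  field_simp
  linear_combination hsk2

/-- `lim_{k→∞} ∂_c λ_k^−(c_k) / √k = −2√g`. -/
theorem deriv_lamMinus_at_ck_limit (g h : ℝ) (hg : 0 < g) (hh : 0 < h) :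
    Filter.Tendsto (fun k : ℕ => dLamMinusAtCk g h k / Real.sqrt k) Filter.atTop
      (nhds (-2 * Real.sqrt g)) := by

  have htanh : Tendsto (fun k : ℕ => Real.tanh (h * k)) atTop (nhds 1) := by
    apply tanh_tendsto.comp
    exact (tendsto_natCast_atTop_atTop (R := ℝ)).const_mul_atTop hh
  have hgk : Tendsto (fun k : ℕ => g / (k:ℝ)) atTop (nhds 0) :=
    (tendsto_const_div_atTop_nhds_zero_nat g)
  have hmain : Tendsto
      (fun k : ℕ => -2 * Real.sqrt (g * Real.tanh (h * k)) / (g / k + Real.tanh (h * k)))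
      atTop (nhds (-2 * Real.sqrt g)) := by
    have hnum : Tendsto (fun k : ℕ => -2 * Real.sqrt (g * Real.tanh (h * k))) atTop
        (nhds (-2 * Real.sqrt g)) := by
      have : Tendsto (fun k : ℕ => g * Real.tanh (h * k)) atTop (nhds g) := by
        simpa using htanh.const_mul g
      exact (Real.continuous_sqrt.continuousAt.tendsto.comp this).const_mul (-2) |>.congr
        (fun k => rfl)
    have hden : Tendsto (fun k : ℕ => g / (k:ℝ) + Real.tanh (h * k)) atTop (nhds 1) := by
      simpa using hgk.add htanh
    simpa [Pi.div_def] using hnum.div hden (by norm_num)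
  apply hmain.congr'
  filter_upwards [eventually_ge_atTop 1] with k hk
  exact (key_eq g h hg hh hk).symm
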